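/- Let W ~ ABSN(α,β) with density g(w) = [(1−αw−βw³)²+1]φ(w)/(2+α²+6αβ+15β²), X ~ N(0,1) independent. Then the conditional distribution of W given {λW > X} has density f(z) = [(1−αz−βz³)²+1]φ(z)Φ(λz)/C(α,β,λ), i.e., is GABSN(α,β,λ). -/

import Mathlib

/-! `∫ g(w) Φ(λw) dw` is `P(λW > X)`, and it equals `C(α, β, λ) / (2 + α² + 6αβ + 15β²)`,
which is all the theorem needs. Expanding the weight `(1 - αw - βw³)² + 1` reduces this to the
moments `∫ wⁿ φ(w) Φ(λw) dw`. Since `Φ(-x) = 1 - Φ(x)`, the even ones are half the Gaussian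
moments `(n - 1)‼`. The odd ones come from Stein's identity `∫ w h(w) φ(w) = ∫ h'(w) φ(w)`:
differentiating `Φ(λw)` produces `φ(w) φ(λw) = φ(√(1 + λ²) w) / √(2π)`, a rescaled Gaussian,
and this is where `δ = λ / √(1 + λ²)` enters. -/

open Real MeasureTheory Filter

/-- standard normal pdf -/
noncomputable def phi (z : ℝ) : ℝ := (Real.sqrt (2 * Real.pi))⁻¹ * Real.exp (-z ^ 2 / 2)

/-- standard normal cdf -/
noncomputable def Phi (z : ℝ) : ℝ := ∫ t in Set.Iic z, phi t

noncomputable def bconst : ℝ := Real.sqrt (2 / Real.pi)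

noncomputable def del (l : ℝ) : ℝ := l / Real.sqrt (1 + l ^ 2)

/-- GABSN normalizing constant -/
noncomputable def C (a β l : ℝ) : ℝ :=
  1 + 3 * a * β - a * bconst * del l - β * bconst * del l * (3 + 2 * l ^ 2) / (1 + l ^ 2)
    + a ^ 2 / 2 + 15 * β ^ 2 / 2

/-- GABSN density -/
noncomputable def f (a β l z : ℝ) : ℝ :=
  (((1 - a * z - β * z ^ 3) ^ 2 + 1) * phi z * Phi (l * z)) / C a β l

/-- ABSN density -/
noncomputable def g (a β w : ℝ) : ℝ :=
  (((1 - a * w - β * w ^ 3) ^ 2 + 1) * phi w) / (2 + a ^ 2 + 6 * a * β + 15 * β ^ 2)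

open scoped Nat

lemma phi_nonneg (z : ℝ) : 0 ≤ phi z := by
  unfold phi; positivity

lemma phi_le (z : ℝ) : phi z ≤ (√(2 * π))⁻¹ := by
  unfold phi
  exact mul_le_of_le_one_right (by positivity) (exp_le_one_iff.2 (by nlinarith [sq_nonneg z]))

lemma phi_neg (z : ℝ) : phi (-z) = phi z := by simp [phi]

lemma hasDerivAt_phi (x : ℝ) : HasDerivAt phi (-x * phi x) x := by
  have h : HasDerivAt (fun y : ℝ => -y ^ 2 / 2) (-x) x :=
    ((hasDerivAt_pow 2 x).fun_neg.div_const 2).congr_deriv (by ring)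
  exact (h.exp.const_mul (√(2 * π))⁻¹).congr_deriv (by simp only [phi]; ring)

lemma continuous_phi : Continuous phi := by
  unfold phi; fun_prop

lemma phi_mul_phi_mul (l w : ℝ) : phi w * phi (l * w) = (√(2 * π))⁻¹ * phi (√(1 + l ^ 2) * w) := by
  have hexp : exp (-w ^ 2 / 2) * exp (-(l * w) ^ 2 / 2) = exp (-(√(1 + l ^ 2) * w) ^ 2 / 2) := by
    rw [← exp_add]
    simp only [mul_pow, sq_sqrt (by positivity : (0 : ℝ) ≤ 1 + l ^ 2)]
    ring_nf
  simp only [phi, ← hexp]; ring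

lemma integrable_pow_mul_phi (n : ℕ) : Integrable (fun x : ℝ => x ^ n * phi x) := by
  have h := (integrable_rpow_mul_exp_neg_mul_sq (b := 1 / 2) (by norm_num)
    (s := n) (by linarith [(n.cast_nonneg : (0 : ℝ) ≤ n)])).const_mul (√(2 * π))⁻¹
  refine h.congr (Eventually.of_forall fun x => ?_)
  simp only [phi, rpow_natCast]; ring_nf

lemma integrable_phi : Integrable phi := by
  simpa using integrable_pow_mul_phi 0

lemma integral_phi : ∫ x, phi x = 1 := by
  simp only [phi, integral_const_mul]
  have h := integral_gaussian (1 / 2)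
  simp only [show ∀ x : ℝ, -(1 / 2) * x ^ 2 = -x ^ 2 / 2 from fun x => by ring] at h
  rw [h, show π / (1 / 2) = 2 * π by ring, inv_mul_cancel₀ (by positivity)]

lemma integrable_pow_mul_phi_mul {ψ : ℝ → ℝ} {K : ℝ} (hψm : AEStronglyMeasurable ψ)
    (hψ : ∀ x, ‖ψ x‖ ≤ K) (n : ℕ) : Integrable (fun x => x ^ n * phi x * ψ x) :=
  (integrable_pow_mul_phi n).mul_bdd hψm (Eventually.of_forall hψ)

/-- Stein's identity `E[W h(W)] = E[h'(W)]` for `h x = x ^ n * ψ x`. -/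
lemma integral_pow_succ_mul_phi_mul {ψ ψ' : ℝ → ℝ} {K K' : ℝ}
    (hψ : ∀ x, HasDerivAt ψ (ψ' x) x) (hψK : ∀ x, ‖ψ x‖ ≤ K) (hψ'K : ∀ x, ‖ψ' x‖ ≤ K')
    (n : ℕ) :
    ∫ x, x ^ (n + 1) * phi x * ψ x
      = n * (∫ x, x ^ (n - 1) * phi x * ψ x) + ∫ x, x ^ n * phi x * ψ' x := by
  have hψm : AEStronglyMeasurable ψ :=
    (continuous_iff_continuousAt.2 fun x => (hψ x).continuousAt).aestronglyMeasurable
  have hψ'm : AEStronglyMeasurable ψ' := by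
    rw [show ψ' = deriv ψ from funext fun x => (hψ x).deriv.symm]
    exact (measurable_deriv ψ).aestronglyMeasurable
  have hI := integrable_pow_mul_phi_mul hψm hψK
  have hI' := integrable_pow_mul_phi_mul hψ'm hψ'K
  have hderiv : ∀ x, HasDerivAt (fun x => x ^ n * phi x * ψ x)
      (n * (x ^ (n - 1) * phi x * ψ x) + x ^ n * phi x * ψ' x - x ^ (n + 1) * phi x * ψ x) x :=
    fun x => (((hasDerivAt_pow n x).mul (hasDerivAt_phi x)).mul (hψ x)).congr_deriv
      (by simp only [Pi.mul_apply]; ring)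
  have hlow : Integrable (fun x => n * (x ^ (n - 1) * phi x * ψ x)) := (hI (n - 1)).const_mul n
  have hsum : Integrable (fun x => n * (x ^ (n - 1) * phi x * ψ x) + x ^ n * phi x * ψ' x) :=
    hlow.add (hI' n)
  have h0 : ∫ x, (n * (x ^ (n - 1) * phi x * ψ x) + x ^ n * phi x * ψ' x
      - x ^ (n + 1) * phi x * ψ x) = 0 :=
    integral_eq_zero_of_hasDerivAt_of_integrable hderiv (hsum.sub (hI (n + 1))) (hI n)
  rw [integral_sub hsum (hI (n + 1)), integral_add hlow (hI' n), integral_const_mul] at h0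
  linarith

lemma integral_pow_add_two_mul_phi (n : ℕ) :
    ∫ x, x ^ (n + 2) * phi x = (n + 1) * ∫ x, x ^ n * phi x := by
  have h := integral_pow_succ_mul_phi_mul (ψ := fun _ => 1) (ψ' := fun _ => 0) (K := 1) (K' := 0)
    (fun x => hasDerivAt_const x 1) (by simp) (by simp) (n + 1)
  simpa using h

lemma integral_pow_two_mul_mul_phi (k : ℕ) : ∫ x, x ^ (2 * k) * phi x = (2 * k - 1)‼ := by
  induction k with
  | zero => simp [integral_phi]
  | succ k ih =>
    rw [show 2 * (k + 1) = 2 * k + 2 by ring, integral_pow_add_two_mul_phi, ih,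
      show 2 * k + 2 - 1 = 2 * k + 1 by omega, Nat.doubleFactorial_add_one]
    push_cast; ring

lemma integral_pow_mul_phi_const_mul (n : ℕ) {c : ℝ} (hc : 0 < c) :
    ∫ x, x ^ n * phi (c * x) = (∫ x, x ^ n * phi x) / c ^ (n + 1) := by
  have h := Measure.integral_comp_mul_left (fun y => y ^ n * phi y) c
  simp only [mul_pow, mul_assoc, integral_const_mul, abs_inv, abs_of_pos hc, smul_eq_mul] at h
  rw [eq_div_iff (by positivity), pow_succ, ← mul_assoc, mul_comm _ (c ^ n), h]
  field_simp

lemma Phi_nonneg (z : ℝ) : 0 ≤ Phi z :=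
  setIntegral_nonneg measurableSet_Iic fun t _ => phi_nonneg t

lemma norm_Phi_le_one (z : ℝ) : ‖Phi z‖ ≤ 1 := by
  rw [norm_of_nonneg (Phi_nonneg z), ← integral_phi]
  exact setIntegral_le_integral integrable_phi (Eventually.of_forall phi_nonneg)

lemma hasDerivAt_Phi (x : ℝ) : HasDerivAt Phi (phi x) x := by
  have hPhi : Phi = fun z => Phi 0 + ∫ t in (0 : ℝ)..z, phi t := funext fun z => by
    rw [← intervalIntegral.integral_Iic_sub_Iic integrable_phi.integrableOn
      integrable_phi.integrableOn, Phi, Phi]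
    ring
  rw [hPhi]
  exact (intervalIntegral.integral_hasDerivAt_right integrable_phi.intervalIntegrable
    (continuous_phi.stronglyMeasurableAtFilter _ _) continuous_phi.continuousAt).const_add _

lemma Phi_neg (x : ℝ) : Phi (-x) = 1 - Phi x := by
  have hsplit : Phi x + ∫ t in Set.Ioi x, phi t = 1 := by
    rw [Phi, intervalIntegral.integral_Iic_add_Ioi integrable_phi.integrableOn
      integrable_phi.integrableOn, integral_phi]
  have hreflect : Phi (-x) = ∫ t in Set.Ioi x, phi t := by
    rw [Phi, ← integral_comp_neg_Ioi]
    exact setIntegral_congr_fun measurableSet_Ioi fun t _ => phi_neg t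
  linarith

lemma hasDerivAt_Phi_const_mul (l x : ℝ) :
    HasDerivAt (fun y => Phi (l * y)) (phi (l * x) * l) x :=
  (hasDerivAt_Phi (l * x)).comp x ((hasDerivAt_id x).const_mul l |>.congr_deriv (mul_one l))

lemma aestronglyMeasurable_Phi_const_mul (l : ℝ) :
    AEStronglyMeasurable (fun y => Phi (l * y)) :=
  (continuous_iff_continuousAt.2 fun x => (hasDerivAt_Phi_const_mul l x).continuousAt)
    |>.aestronglyMeasurable

/-- Even moments: the reflection `x ↦ -x` turns `Phi (l * x)` into `1 - Phi (l * x)`. -/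
lemma integral_pow_mul_phi_mul_Phi_of_even {n : ℕ} (hn : Even n) (l : ℝ) :
    ∫ x, x ^ n * phi x * Phi (l * x) = (∫ x, x ^ n * phi x) / 2 := by
  have hI := integrable_pow_mul_phi_mul (aestronglyMeasurable_Phi_const_mul l)
    (fun x => norm_Phi_le_one (l * x)) n
  have hreflect : ∫ x, x ^ n * phi x * Phi (l * x)
      = ∫ x, (x ^ n * phi x - x ^ n * phi x * Phi (l * x)) := by
    rw [← integral_neg_eq_self]
    congr 1 with x
    rw [hn.neg_pow, phi_neg, mul_neg, Phi_neg]
    ring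
  rw [integral_sub (integrable_pow_mul_phi n) hI] at hreflect
  linarith

lemma integral_pow_succ_mul_phi_mul_Phi (n : ℕ) (l : ℝ) :
    ∫ x, x ^ (n + 1) * phi x * Phi (l * x)
      = n * (∫ x, x ^ (n - 1) * phi x * Phi (l * x))
        + l * (∫ x, x ^ n * phi x) / (√(2 * π) * √(1 + l ^ 2) ^ (n + 1)) := by
  have hbound : ∀ x, ‖phi (l * x) * l‖ ≤ (√(2 * π))⁻¹ * |l| := fun x => by
    rw [norm_mul, norm_of_nonneg (phi_nonneg _), norm_eq_abs]
    exact mul_le_mul_of_nonneg_right (phi_le _) (abs_nonneg l)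
  rw [integral_pow_succ_mul_phi_mul (hasDerivAt_Phi_const_mul l)
    (fun x => norm_Phi_le_one (l * x)) hbound n]
  congr 1
  have hgauss : ∀ x, x ^ n * phi x * (phi (l * x) * l)
      = l * (√(2 * π))⁻¹ * (x ^ n * phi (√(1 + l ^ 2) * x)) := fun x => by
    rw [← mul_assoc, mul_assoc (x ^ n), phi_mul_phi_mul]; ring
  simp only [hgauss, integral_const_mul]
  rw [integral_pow_mul_phi_const_mul n (by positivity)]
  field_simp

lemma integral_pow_two_mul_mul_phi_mul_Phi (k : ℕ) (l : ℝ) :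
    ∫ x, x ^ (2 * k) * phi x * Phi (l * x) = (2 * k - 1)‼ / 2 := by
  rw [integral_pow_mul_phi_mul_Phi_of_even (even_two_mul k), integral_pow_two_mul_mul_phi]

lemma bconst_eq : bconst = 2 / √(2 * π) := by
  rw [eq_div_iff (by positivity), bconst, ← sqrt_mul (by positivity),
    show 2 / π * (2 * π) = 2 ^ 2 by field_simp, sqrt_sq zero_le_two]

lemma integral_mul_phi_mul_Phi (l : ℝ) :
    ∫ x, x * phi x * Phi (l * x) = bconst * del l / 2 := by
  have h := integral_pow_succ_mul_phi_mul_Phi 0 l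
  simp only [zero_add, pow_one, pow_zero, one_mul, CharP.cast_eq_zero, zero_mul, integral_phi] at h
  rw [h, bconst_eq, del]
  field_simp

lemma integral_pow_three_mul_phi_mul_Phi (l : ℝ) :
    ∫ x, x ^ 3 * phi x * Phi (l * x) = bconst * del l * (3 + 2 * l ^ 2) / (2 * (1 + l ^ 2)) := by
  have h2 : ∫ x, x ^ 2 * phi x = 1 := by
    simpa [Nat.doubleFactorial] using integral_pow_two_mul_mul_phi 1
  have hσ : √(1 + l ^ 2) ^ (2 + 1) = (1 + l ^ 2) * √(1 + l ^ 2) := by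
    rw [pow_succ, sq_sqrt (by positivity)]
  rw [integral_pow_succ_mul_phi_mul_Phi 2 l, hσ]
  simp only [Nat.add_one_sub_one, pow_one, integral_mul_phi_mul_Phi, h2, Nat.cast_ofNat]
  rw [del, bconst_eq]
  field_simp
  ring

lemma integral_sum_mul_pow_mul_phi_mul {m : ℕ} (c : Fin m → ℝ) {ψ : ℝ → ℝ} {K : ℝ}
    (hψm : AEStronglyMeasurable ψ) (hψ : ∀ x, ‖ψ x‖ ≤ K) :
    ∫ x, (∑ i, c i * x ^ (i : ℕ)) * phi x * ψ x = ∑ i, c i * ∫ x, x ^ (i : ℕ) * phi x * ψ x := by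
  have hsum : ∀ x, (∑ i, c i * x ^ (i : ℕ)) * phi x * ψ x
      = ∑ i, c i * (x ^ (i : ℕ) * phi x * ψ x) := fun x => by
    simp only [Finset.sum_mul, mul_assoc]
  simp only [hsum]
  rw [integral_finsetSum _ fun (i : Fin m) _ =>
    (integrable_pow_mul_phi_mul hψm hψ i).const_mul (c i)]
  simp only [integral_const_mul]

lemma integral_weight_mul_phi_mul_Phi (a β l : ℝ) :
    ∫ x, ((1 - a * x - β * x ^ 3) ^ 2 + 1) * phi x * Phi (l * x) = C a β l := by
  have hpoly : ∀ x : ℝ, (1 - a * x - β * x ^ 3) ^ 2 + 1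
      = ∑ i : Fin 7, ![2, -2 * a, a ^ 2, -2 * β, 2 * a * β, 0, β ^ 2] i * x ^ (i : ℕ) := fun x => by
    simp only [Fin.sum_univ_seven, Matrix.cons_val, Fin.isValue, Fin.coe_ofNat_eq_mod,
      Nat.reduceMod]
    ring
  simp only [hpoly]
  rw [integral_sum_mul_pow_mul_phi_mul _ (aestronglyMeasurable_Phi_const_mul l)
    fun x => norm_Phi_le_one (l * x)]
  have even_moment (k : ℕ) := integral_pow_two_mul_mul_phi_mul_Phi k l
  have m0 : ∫ x, phi x * Phi (l * x) = 1 / 2 := by simpa using even_moment 0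
  have m2 : ∫ x, x ^ 2 * phi x * Phi (l * x) = 1 / 2 := by
    simpa [Nat.doubleFactorial] using even_moment 1
  have m4 : ∫ x, x ^ 4 * phi x * Phi (l * x) = 3 / 2 := by
    simpa [Nat.doubleFactorial] using even_moment 2
  have m6 : ∫ x, x ^ 6 * phi x * Phi (l * x) = 15 / 2 := by
    simpa [Nat.doubleFactorial] using even_moment 3
  simp only [Fin.sum_univ_seven, Matrix.cons_val, Fin.isValue, Fin.coe_ofNat_eq_mod,
    Nat.reduceMod, pow_zero, one_mul, pow_one]
  rw [m0, m2, m4, m6, integral_mul_phi_mul_Phi, integral_pow_three_mul_phi_mul_Phi, C]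
  field_simp
  ring

lemma integral_g_mul_Phi (a β l : ℝ) :
    ∫ w, g a β w * Phi (l * w) = C a β l / (2 + a ^ 2 + 6 * a * β + 15 * β ^ 2) := by
  simp only [g, div_mul_eq_mul_div, integral_div, integral_weight_mul_phi_mul_Phi]

theorem stmt_18 (a β l : ℝ) (z : ℝ) :
    g a β z * Phi (l * z) / (∫ w : ℝ, g a β w * Phi (l * w)) = f a β l z := by
  have hD : 2 + a ^ 2 + 6 * a * β + 15 * β ^ 2 ≠ 0 := by
    nlinarith [sq_nonneg (a + 3 * β), sq_nonneg β]
  rw [integral_g_mul_Phi, g, f, div_mul_eq_mul_div, div_div_div_cancel_right₀ hD]
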